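/- Under Assumption A1 and the threshold condition (T) on the penalty parameters, every d-stationary point z of the penalty problem (P1) satisfying Θ(z) ≤ γ̄ is feasible for (P0), i.e. z ∈ F₀. -/

import Mathlib

open Filter Topology

noncomputable section

section General

variable {E F : Type*} [NormedAddCommGroup E] [NormedSpace ℝ E]
  [NormedAddCommGroup F] [NormedSpace ℝ F]

/-- `f` has directional derivative `y` at `x` along direction `d`. -/
def HasDirDeriv (f : E → F) (x d : E) (y : F) : Prop :=
  Tendsto (fun τ : ℝ => τ⁻¹ • (f (x + τ • d) - f x)) (𝓝[>] 0) (𝓝 y)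

/-- `f` has first- and second-order directional derivatives `y₁`, `y₂` at `x` along `d`. -/
def HasDirDeriv2 (f : E → F) (x d : E) (y₁ y₂ : F) : Prop :=
  HasDirDeriv f x d y₁ ∧
    Tendsto (fun τ : ℝ => (τ ^ 2 / 2)⁻¹ • (f (x + τ • d) - f x - τ • y₁)) (𝓝[>] 0) (𝓝 y₂)

open Classical in
def dirD (f : E → F) (x d : E) : F :=
  if h : ∃ y, HasDirDeriv f x d y then h.choose else 0

open Classical in
def dirD2 (f : E → F) (x d : E) : F :=
  if h : ∃ y, Tendsto
      (fun τ : ℝ => (τ ^ 2 / 2)⁻¹ • (f (x + τ • d) - f x - τ • dirD f x d)) (𝓝[>] 0) (𝓝 y)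
  then h.choose else 0

/-- The (Bouligand) tangent cone of `s` at `x`. -/
def tangentCone (s : Set E) (x : E) : Set E :=
  {d | ∃ (z : ℕ → E) (τ : ℕ → ℝ), (∀ k, z k ∈ s) ∧ Tendsto z atTop (𝓝 x) ∧
    (∀ k, 0 < τ k) ∧ Tendsto τ atTop (𝓝 0) ∧
    Tendsto (fun k => (τ k)⁻¹ • (z k - x)) atTop (𝓝 d)}

/-- The radial cone of `s` at `x`. -/
def radialCone (s : Set E) (x : E) : Set E :=
  {d | ∃ τ : ℕ → ℝ, (∀ k, 0 < τ k) ∧ Tendsto τ atTop (𝓝 0) ∧ ∀ k, x + τ k • d ∈ s}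

/-- `f` is twice semidifferentiable (in the sense of Rockafellar-Wets / Cui-Pang). -/
def TwiceSemidiff (f : E → ℝ) : Prop :=
  ∀ x d : E, ∃ y₁ y₂ : ℝ,
    Tendsto (fun p : ℝ × E => (f (x + p.1 • p.2) - f x) / p.1)
      ((𝓝[>] 0) ×ˢ 𝓝 d) (𝓝 y₁) ∧
    Tendsto (fun p : ℝ × E => (f (x + p.1 • p.2) - f x - p.1 * dirD f x p.2) / (p.1 ^ 2 / 2))
      ((𝓝[>] 0) ×ˢ 𝓝 d) (𝓝 y₂)

end General
section Multi

/-- The parameter space `ℝⁿ`. -/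
abbrev TSp (n : ℕ) : Type := EuclideanSpace ℝ (Fin n)

/-- The space of auxiliary variables `u = (u₁, …, u_L)`. -/
abbrev USp (L : ℕ) (N : Fin L → ℕ) : Type := EuclideanSpace ℝ (Σ ℓ : Fin L, Fin (N ℓ))

/-- The full variable space `z = (θ, u)` with Euclidean norm. -/
abbrev ZSp (n L : ℕ) (N : Fin L → ℕ) : Type :=
  EuclideanSpace ℝ (Fin n ⊕ Σ ℓ : Fin L, Fin (N ℓ))

variable {n L : ℕ} {N : Fin L → ℕ}

/-- The `θ`-block of `z`. -/
def thOf (z : ZSp n L N) : TSp n := WithLp.toLp 2 (fun i => z (Sum.inl i))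

/-- The `u`-block of `z`. -/
def uOf (z : ZSp n L N) : USp L N := WithLp.toLp 2 (fun j => z (Sum.inr j))

/-- The block `u_ℓ` of `z`. -/
def uBlk (z : ZSp n L N) (ℓ : Fin L) : EuclideanSpace ℝ (Fin (N ℓ)) :=
  WithLp.toLp 2 (fun i => z (Sum.inr ⟨ℓ, i⟩))

/-- The truncation `(u₁, …, u_{ℓ-1}, 0, …, 0)` of the `u`-block of `z`. -/
def uLow (z : ZSp n L N) (ℓ : Fin L) : USp L N :=
  WithLp.toLp 2 (fun j => if j.1 < ℓ then z (Sum.inr j) else 0)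

/-- `ψ ℓ` only depends on `θ` and the blocks `u_j` with `j < ℓ`; this encodes that
`ψ_{ℓ-1}` is a function of `(θ, u₁, …, u_{ℓ-1})`. -/
def DepBelow (ψ : (ℓ : Fin L) → ZSp n L N → EuclideanSpace ℝ (Fin (N ℓ))) : Prop :=
  ∀ ℓ : Fin L, ∀ z z' : ZSp n L N, thOf z = thOf z' →
    (∀ j : Fin L, j < ℓ → uBlk z j = uBlk z' j) → ψ ℓ z = ψ ℓ z'

/-- The feasible set `F₀ = {z : u_ℓ = ψ_{ℓ-1}(θ, u₁, …, u_{ℓ-1})}`. -/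
def Feas (ψ : (ℓ : Fin L) → ZSp n L N → EuclideanSpace ℝ (Fin (N ℓ))) : Set (ZSp n L N) :=
  {z | ∀ ℓ, uBlk z ℓ = ψ ℓ z}

/-- The objective `F(z) = g(u) + λ‖θ‖²` of problem (P0). -/
def Fobj (g : USp L N → ℝ) (lam : ℝ) (z : ZSp n L N) : ℝ :=
  g (uOf z) + lam * ‖thOf z‖ ^ 2

/-- The objective `Θ(z) = F(z) + Σ_ℓ β_ℓ ‖u_ℓ − ψ_{ℓ-1}(θ, u₁, …, u_{ℓ-1})‖₁`
of the penalty problem (P1). -/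
def Th (g : USp L N → ℝ) (lam : ℝ)
    (ψ : (ℓ : Fin L) → ZSp n L N → EuclideanSpace ℝ (Fin (N ℓ))) (β : Fin L → ℝ)
    (z : ZSp n L N) : ℝ :=
  Fobj g lam z + ∑ ℓ, β ℓ * ∑ i, |uBlk z ℓ i - ψ ℓ z i|

/-- The `ε`-enlargement `{z : Θ(z) ≤ γ} + ε·B(0,1)` of a level set of `Θ`. -/
def LevE (g : USp L N → ℝ) (lam : ℝ)
    (ψ : (ℓ : Fin L) → ZSp n L N → EuclideanSpace ℝ (Fin (N ℓ))) (β : Fin L → ℝ)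
    (γ ε : ℝ) : Set (ZSp n L N) :=
  {w | ∃ v : ZSp n L N, Th g lam ψ β v ≤ γ ∧ ‖w - v‖ ≤ ε}

end Multi

section BuildHelpers
variable {E F : Type*} [NormedAddCommGroup E] [NormedSpace ℝ E]
  [NormedAddCommGroup F] [NormedSpace ℝ F]

lemma dirD_eq {f : E → F} {x d : E} {y : F} (h : HasDirDeriv f x d y) : dirD f x d = y := by
  have hex : ∃ y, HasDirDeriv f x d y := ⟨y, h⟩
  rw [dirD, dif_pos hex]
  exact tendsto_nhds_unique hex.choose_spec h

lemma hasDirDeriv_dirD {f : E → F} {x d : E} (h : ∃ y, HasDirDeriv f x d y) :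
    HasDirDeriv f x d (dirD f x d) := by
  obtain ⟨y, hy⟩ := h
  rw [dirD_eq hy]; exact hy

lemma eucl_norm_le_sum {ι : Type*} [Fintype ι] (x : EuclideanSpace ℝ ι) : ‖x‖ ≤ ∑ i, |x i| := by
  rw [EuclideanSpace.norm_eq]
  have h1 : ∑ i, ‖x i‖ ^ 2 ≤ (∑ i, ‖x i‖) ^ 2 :=
    Finset.sum_sq_le_sq_sum_of_nonneg (fun i _ => norm_nonneg _)
  calc Real.sqrt (∑ i, ‖x i‖ ^ 2) ≤ Real.sqrt ((∑ i, ‖x i‖) ^ 2) := Real.sqrt_le_sqrt h1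
  _ = ∑ i, ‖x i‖ := Real.sqrt_sq (Finset.sum_nonneg fun i _ => norm_nonneg _)
  _ = ∑ i, |x i| := by simp [Real.norm_eq_abs]

end BuildHelpers

section BuildSec
variable {n L : ℕ} {N : Fin L → ℕ}

/-- Norm of a vector supported on a single block equals the block norm. -/
lemma eucl_sigma_norm_blk (w : USp L N) (m : Fin L) (v : EuclideanSpace ℝ (Fin (N m)))
    (hv : ∀ k, w ⟨m, k⟩ = v k)
    (hw : ∀ j : (Σ ℓ : Fin L, Fin (N ℓ)), j.1 ≠ m → w j = 0) :
    ‖w‖ = ‖v‖ := by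
  rw [EuclideanSpace.norm_eq, EuclideanSpace.norm_eq]
  congr 1
  rw [← Finset.univ_sigma_univ, Finset.sum_sigma]
  rw [Finset.sum_eq_single m]
  · exact Finset.sum_congr rfl fun k _ => by rw [hv k]
  · intro a _ ha
    apply Finset.sum_eq_zero
    intro b _
    rw [hw ⟨a, b⟩ ha]
    simp
  · simp

def buildDir (ψ : (ℓ : Fin L) → ZSp n L N → EuclideanSpace ℝ (Fin (N ℓ)))
    (z : ZSp n L N) (lb : Fin L) (r : EuclideanSpace ℝ (Fin (N lb))) :
    ℕ → ZSp n L N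
  | 0 => 0
  | (m+1) => WithLp.toLp 2 fun i =>
      (match i with
      | Sum.inl _ => 0
      | Sum.inr ⟨j, k⟩ =>
        if (j : ℕ) = m then
          (if h : j = lb then -(r (h ▸ k))
           else if lb < j then dirD (ψ j) z (buildDir ψ z lb r m) k
           else 0)
        else buildDir ψ z lb r m (Sum.inr ⟨j, k⟩))

variable {ψ : (ℓ : Fin L) → ZSp n L N → EuclideanSpace ℝ (Fin (N ℓ))}
  {z : ZSp n L N} {lb : Fin L} {r : EuclideanSpace ℝ (Fin (N lb))}

lemma buildDir_inl (m : ℕ) (a : Fin n) : buildDir ψ z lb r m (Sum.inl a) = 0 := by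
  cases m with
  | zero => rfl
  | succ m => rfl

lemma buildDir_succ_apply (m : ℕ) (j : Fin L) (k : Fin (N j)) :
    buildDir ψ z lb r (m+1) (Sum.inr ⟨j, k⟩) =
      if (j : ℕ) = m then
        (if h : j = lb then -(r (h ▸ k))
         else if lb < j then dirD (ψ j) z (buildDir ψ z lb r m) k
         else 0)
      else buildDir ψ z lb r m (Sum.inr ⟨j, k⟩) := rfl

lemma buildDir_of_le (m : ℕ) (j : Fin L) (k : Fin (N j)) (h : m ≤ (j : ℕ)) :
    buildDir ψ z lb r m (Sum.inr ⟨j, k⟩) = 0 := by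
  induction m with
  | zero => rfl
  | succ m ih =>
    rw [buildDir_succ_apply, if_neg (by omega), ih (by omega)]

lemma buildDir_stab (m : ℕ) (j : Fin L) (k : Fin (N j)) (h : (j : ℕ) < m) :
    buildDir ψ z lb r m (Sum.inr ⟨j, k⟩) = buildDir ψ z lb r ((j : ℕ) + 1) (Sum.inr ⟨j, k⟩) := by
  induction m with
  | zero => omega
  | succ m ih =>
    rcases Nat.lt_or_ge (j : ℕ) m with h' | h'
    · rw [buildDir_succ_apply, if_neg (by omega), ih h']
    · have : (j : ℕ) = m := by omega
      subst this
      rfl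

lemma zsp_apply_add_smul (z w : ZSp n L N) (τ : ℝ) (i : Fin n ⊕ (Σ ℓ : Fin L, Fin (N ℓ))) :
    (z + τ • w) i = z i + τ * w i := by
  simp [PiLp.add_apply, PiLp.smul_apply]

lemma buildDir_agree_below (m m' : ℕ) (j' : Fin L) (k : Fin (N j')) (h : (j' : ℕ) < m)
    (h' : (j' : ℕ) < m') :
    buildDir ψ z lb r m (Sum.inr ⟨j', k⟩) = buildDir ψ z lb r m' (Sum.inr ⟨j', k⟩) := by
  rw [buildDir_stab m j' k h, buildDir_stab m' j' k h']

lemma buildDir_below_lb (m : ℕ) (j : Fin L) (k : Fin (N j)) (h : j < lb) :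
    buildDir ψ z lb r m (Sum.inr ⟨j, k⟩) = 0 := by
  rcases Nat.lt_or_ge (j : ℕ) m with h' | h'
  · rw [buildDir_stab m j k h', buildDir_succ_apply, if_pos rfl, dif_neg (Fin.ne_of_lt h),
      if_neg (by exact fun hc => absurd (lt_trans h hc) (lt_irrefl _))]
  · exact buildDir_of_le m j k h'

lemma buildDir_at_lb (m : ℕ) (k : Fin (N lb)) (h : (lb : ℕ) < m) :
    buildDir ψ z lb r m (Sum.inr ⟨lb, k⟩) = -(r k) := by
  rw [buildDir_stab m lb k h, buildDir_succ_apply, if_pos rfl, dif_pos rfl]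

lemma buildDir_above_lb (m : ℕ) (j : Fin L) (k : Fin (N j)) (hj : lb < j) (h : (j : ℕ) < m) :
    buildDir ψ z lb r m (Sum.inr ⟨j, k⟩) = dirD (ψ j) z (buildDir ψ z lb r (j : ℕ)) k := by
  rw [buildDir_stab m j k h, buildDir_succ_apply, if_pos rfl, dif_neg (Fin.ne_of_gt hj),
    if_pos hj]

lemma thOf_add_smul_buildDir (τ : ℝ) (m : ℕ) :
    thOf (z + τ • buildDir ψ z lb r m) = thOf z := by
  ext a
  show (z + τ • buildDir ψ z lb r m) (Sum.inl a) = z (Sum.inl a)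
  rw [zsp_apply_add_smul, buildDir_inl]
  ring

lemma psi_buildDir_congr (hdep : DepBelow ψ) (j : Fin L) (τ : ℝ) (m m' : ℕ)
    (hm : (j : ℕ) ≤ m) (hm' : (j : ℕ) ≤ m') :
    ψ j (z + τ • buildDir ψ z lb r m) = ψ j (z + τ • buildDir ψ z lb r m') := by
  apply hdep j
  · rw [thOf_add_smul_buildDir, thOf_add_smul_buildDir]
  · intro j' hj'
    ext k
    show (z + τ • buildDir ψ z lb r m) (Sum.inr ⟨j', k⟩)
        = (z + τ • buildDir ψ z lb r m') (Sum.inr ⟨j', k⟩)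
    rw [zsp_apply_add_smul, zsp_apply_add_smul,
      buildDir_agree_below m m' j' k (lt_of_lt_of_le (Fin.lt_iff_val_lt_val.mp hj') hm)
      (lt_of_lt_of_le (Fin.lt_iff_val_lt_val.mp hj') hm')]

lemma psi_buildDir_const (hdep : DepBelow ψ) (j : Fin L) (τ : ℝ) (m : ℕ) (hj : j ≤ lb) :
    ψ j (z + τ • buildDir ψ z lb r m) = ψ j z := by
  apply hdep j
  · rw [thOf_add_smul_buildDir]
  · intro j' hj'
    ext k
    show (z + τ • buildDir ψ z lb r m) (Sum.inr ⟨j', k⟩) = z (Sum.inr ⟨j', k⟩)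
    rw [zsp_apply_add_smul, buildDir_below_lb m j' k (lt_of_lt_of_le hj' hj)]
    ring

end BuildSec

set_option maxHeartbeats 1000000 in
/-- Lemma 3.3: under Assumption A1 and the threshold condition (T), every d-stationary
point of (P1) in the level set `{Θ ≤ γ̄}` is feasible for (P0). -/
theorem stmt10
    {n L : ℕ} (hn : 0 < n) (hL : 0 < L) {N : Fin L → ℕ} (hN : ∀ ℓ, 0 < N ℓ)
    (lam : ℝ) (hlam : 0 < lam) (β : Fin L → ℝ) (hβ : ∀ ℓ, 0 < β ℓ)
    (g : USp L N → ℝ) (hg0 : ∀ u, 0 ≤ g u)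
    (ψ : (ℓ : Fin L) → ZSp n L N → EuclideanSpace ℝ (Fin (N ℓ)))
    (hdep : DepBelow ψ)
    -- Assumption A1
    (hgLip : LocallyLipschitz g) (hψLip : ∀ ℓ, LocallyLipschitz (ψ ℓ))
    (hgdd : ∀ u du : USp L N, ∃ y, HasDirDeriv g u du y)
    (hψdd : ∀ ℓ, ∀ z d : ZSp n L N, ∃ y, HasDirDeriv (ψ ℓ) z d y)
    -- the reference feasible point `z⁰` (with `θ`-block `0`), giving `γ̄ = Θ(z⁰)`
    (z0 : ZSp n L N) (hz0F : z0 ∈ Feas ψ) (hz0th : thOf z0 = 0)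
    -- Lipschitz moduli on the enlarged level set `{Θ ≤ γ̄} + εB`
    (Kg : ℝ) (hKg : 0 < Kg) (K : ℕ → ℝ) (hKpos : ∀ p, 1 ≤ p → p < L → 0 < K p)
    (ε : ℝ) (hε : 0 < ε)
    (hLipg : ∀ w w' : ZSp n L N, w ∈ LevE g lam ψ β (Th g lam ψ β z0) ε →
      w' ∈ LevE g lam ψ β (Th g lam ψ β z0) ε → thOf w = thOf w' →
      |g (uOf w) - g (uOf w')| ≤ Kg * ‖uOf w - uOf w'‖)
    (hLipψ : ∀ ℓ : Fin L, 1 ≤ (ℓ : ℕ) → ∀ w w' : ZSp n L N,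
      w ∈ LevE g lam ψ β (Th g lam ψ β z0) ε →
      w' ∈ LevE g lam ψ β (Th g lam ψ β z0) ε → thOf w = thOf w' →
      ‖ψ ℓ w - ψ ℓ w'‖ ≤ K (ℓ : ℕ) * ‖uLow w ℓ - uLow w' ℓ‖)
    -- threshold condition (T) on the penalty parameters
    (hT : ∀ ℓ : Fin L, Kg * ∏ p ∈ Finset.Ico ((ℓ : ℕ) + 1) L, (1 + K p) < β ℓ)
    (z : ZSp n L N)
    (hstat : ∀ d, 0 ≤ dirD (Th g lam ψ β) z d)
    (hlev : Th g lam ψ β z ≤ Th g lam ψ β z0) :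
    z ∈ Feas ψ := by
  classical
  by_contra hzF
  have hex : ∃ ℓ, uBlk z ℓ ≠ ψ ℓ z := by
    by_contra h
    push_neg at h
    exact hzF h
  -- the largest violated index
  set S : Finset (Fin L) := Finset.univ.filter (fun ℓ => uBlk z ℓ ≠ ψ ℓ z) with hSdef
  have hS : S.Nonempty := by
    obtain ⟨ℓ, hℓ⟩ := hex
    exact ⟨ℓ, Finset.mem_filter.mpr ⟨Finset.mem_univ _, hℓ⟩⟩
  set lb := S.max' hS with hlbdef
  have hlbmem : uBlk z lb ≠ ψ lb z := (Finset.mem_filter.mp (S.max'_mem hS)).2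
  have hmax : ∀ ℓ : Fin L, lb < ℓ → uBlk z ℓ = ψ ℓ z := by
    intro ℓ h
    by_contra h'
    exact absurd (S.le_max' ℓ (Finset.mem_filter.mpr ⟨Finset.mem_univ _, h'⟩)) (not_le.mpr h)
  set r : EuclideanSpace ℝ (Fin (N lb)) := uBlk z lb - ψ lb z with hrdef
  have hrne : r ≠ 0 := sub_ne_zero.mpr hlbmem
  have hri : ∀ i, r i = uBlk z lb i - ψ lb z i := by
    intro i; rw [hrdef]; simp [PiLp.sub_apply]
  set R1 := ∑ i, |r i| with hR1def
  have hR1pos : 0 < R1 := by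
    obtain ⟨i, hi⟩ : ∃ i, r i ≠ 0 := by
      by_contra h; push_neg at h
      exact hrne (by ext i; exact h i)
    exact Finset.sum_pos' (fun i _ => abs_nonneg _) ⟨i, Finset.mem_univ i, abs_pos.mpr hi⟩
  set d := buildDir ψ z lb r L with hddef
  -- coordinates of d
  have hdinl : ∀ a, d (Sum.inl a) = 0 := fun a => buildDir_inl L a
  have hdlt : ∀ j : Fin L, j < lb → ∀ k, d (Sum.inr ⟨j, k⟩) = 0 := by
    intro j hj k
    show buildDir ψ z lb r L (Sum.inr ⟨j, k⟩) = 0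
    exact buildDir_below_lb L j k hj
  have hdlb : ∀ k, d (Sum.inr ⟨lb, k⟩) = -(r k) := by
    intro k
    show buildDir ψ z lb r L (Sum.inr ⟨lb, k⟩) = -(r k)
    exact buildDir_at_lb L k lb.2
  have hdgt : ∀ j : Fin L, lb < j → uBlk d j = dirD (ψ j) z (buildDir ψ z lb r (j : ℕ)) := by
    intro j hj
    ext k
    show buildDir ψ z lb r L (Sum.inr ⟨j, k⟩) = _
    exact buildDir_above_lb L j k hj j.2
  -- θ-block is constant along the path
  have hth : ∀ τ : ℝ, thOf (z + τ • d) = thOf z := fun τ => thOf_add_smul_buildDir τ L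
  -- blocks below lb are constant along the path
  have hublk_lt : ∀ j : Fin L, j < lb → ∀ τ : ℝ, uBlk (z + τ • d) j = uBlk z j := by
    intro j hj τ
    ext k
    show (z + τ • d) (Sum.inr ⟨j, k⟩) = z (Sum.inr ⟨j, k⟩)
    rw [zsp_apply_add_smul, hdlt j hj k]
    ring
  -- ψ at indices ≤ lb is constant along the path
  have hψconst : ∀ j : Fin L, j ≤ lb → ∀ τ : ℝ, ψ j (z + τ • d) = ψ j z :=
    fun j hj τ => psi_buildDir_const hdep j τ L hj
  -- directional derivatives of ψ along d for blocks above lb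
  have hyd : ∀ j : Fin L, lb < j → HasDirDeriv (ψ j) z d (uBlk d j) := by
    intro j hj
    have h1 : HasDirDeriv (ψ j) z (buildDir ψ z lb r (j : ℕ))
        (dirD (ψ j) z (buildDir ψ z lb r (j : ℕ))) := hasDirDeriv_dirD (hψdd j z _)
    rw [hdgt j hj]
    refine h1.congr fun τ => ?_
    rw [psi_buildDir_congr hdep j τ (j : ℕ) L le_rfl (le_of_lt j.2)]
  -- membership in the enlarged level set
  have hzmem : z ∈ LevE g lam ψ β (Th g lam ψ β z0) ε := ⟨z, hlev, by rw [sub_self, norm_zero]; exact hε.le⟩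
  set c0 := min (ε / (‖d‖ + 1)) 1 with hc0def
  have hc0pos : 0 < c0 := lt_min (div_pos hε (by positivity)) one_pos
  have hsmall : ∀ τ : ℝ, 0 < τ → τ < c0 → z + τ • d ∈ LevE g lam ψ β (Th g lam ψ β z0) ε := by
    intro τ h1 h2
    refine ⟨z, hlev, ?_⟩
    rw [add_sub_cancel_left, norm_smul, Real.norm_eq_abs, abs_of_pos h1]
    have h3 : τ < ε / (‖d‖ + 1) := lt_of_lt_of_le h2 (min_le_left _ _)
    have h4 : τ * (‖d‖ + 1) < ε := (lt_div_iff₀ (by positivity)).mp h3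
    nlinarith [norm_nonneg d, h1]
  have hev : ∀ᶠ τ in 𝓝[>] (0 : ℝ), 0 < τ ∧ τ < c0 := by
    have hIoo : Set.Ioo (0 : ℝ) c0 ∈ 𝓝[>] (0 : ℝ) :=
      Ioo_mem_nhdsGT_of_mem ⟨le_refl 0, hc0pos⟩
    filter_upwards [hIoo] with τ hτ
    exact ⟨hτ.1, hτ.2⟩
  -- g-term
  set du := uOf d with hdudef
  have huOf : ∀ τ : ℝ, uOf (z + τ • d) = uOf z + τ • du := by
    intro τ
    ext j
    show (z + τ • d) (Sum.inr j) = (uOf z + τ • uOf d) j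
    rw [zsp_apply_add_smul]
    simp [uOf, PiLp.add_apply, PiLp.smul_apply]
  set yg := dirD g (uOf z) du with hygdef
  have hgdir : HasDirDeriv g (uOf z) du yg := hasDirDeriv_dirD (hgdd _ _)
  have hgterm : Tendsto (fun τ : ℝ => τ⁻¹ * (g (uOf (z + τ • d)) - g (uOf z)))
      (𝓝[>] 0) (𝓝 yg) := by
    refine hgdir.congr fun τ => ?_
    rw [smul_eq_mul, huOf τ]
  have hyg : yg ≤ Kg * ‖du‖ := by
    refine le_of_tendsto hgterm ?_
    filter_upwards [hev] with τ hτ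
    have hmem := hsmall τ hτ.1 hτ.2
    have hb := hLipg (z + τ • d) z hmem hzmem (hth τ)
    have hnorm : ‖uOf (z + τ • d) - uOf z‖ = τ * ‖du‖ := by
      rw [huOf τ, add_sub_cancel_left, norm_smul, Real.norm_eq_abs, abs_of_pos hτ.1]
    have hstep : g (uOf (z + τ • d)) - g (uOf z) ≤ Kg * (τ * ‖du‖) := by
      calc g (uOf (z + τ • d)) - g (uOf z) ≤ |g (uOf (z + τ • d)) - g (uOf z)| := le_abs_self _
      _ ≤ Kg * ‖uOf (z + τ • d) - uOf z‖ := hb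
      _ = Kg * (τ * ‖du‖) := by rw [hnorm]
    calc τ⁻¹ * (g (uOf (z + τ • d)) - g (uOf z)) ≤ τ⁻¹ * (Kg * (τ * ‖du‖)) :=
          mul_le_mul_of_nonneg_left hstep (inv_nonneg.mpr hτ.1.le)
    _ = Kg * ‖du‖ := by
          have hτ0 : τ ≠ 0 := ne_of_gt hτ.1
          field_simp
  -- bound on the directional derivative blocks of ψ
  have hyb : ∀ j : Fin L, lb < j → ‖uBlk d j‖ ≤ K (j : ℕ) * ‖uLow d j‖ := by
    intro j hj
    have hnt : Tendsto (fun τ : ℝ => ‖τ⁻¹ • (ψ j (z + τ • d) - ψ j z)‖) (𝓝[>] 0)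
        (𝓝 ‖uBlk d j‖) := (hyd j hj).norm
    refine le_of_tendsto hnt ?_
    filter_upwards [hev] with τ hτ
    have hmem := hsmall τ hτ.1 hτ.2
    have h1le : 1 ≤ (j : ℕ) := by
      have := Fin.lt_iff_val_lt_val.mp hj
      omega
    have hb := hLipψ j h1le (z + τ • d) z hmem hzmem (hth τ)
    have hlow : uLow (z + τ • d) j - uLow z j = τ • uLow d j := by
      ext k
      simp only [uLow, PiLp.sub_apply, PiLp.smul_apply, smul_eq_mul]
      by_cases hk : k.1 < j
      · rw [if_pos hk, if_pos hk, if_pos hk, zsp_apply_add_smul]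
        ring
      · rw [if_neg hk, if_neg hk, if_neg hk]
        ring
    rw [hlow, norm_smul, Real.norm_eq_abs, abs_of_pos hτ.1] at hb
    rw [norm_smul, Real.norm_eq_abs, abs_of_pos (inv_pos.mpr hτ.1)]
    calc τ⁻¹ * ‖ψ j (z + τ • d) - ψ j z‖ ≤ τ⁻¹ * (K (j : ℕ) * (τ * ‖uLow d j‖)) :=
          mul_le_mul_of_nonneg_left hb (inv_nonneg.mpr hτ.1.le)
    _ = K (j : ℕ) * ‖uLow d j‖ := by
          have hτ0 : τ ≠ 0 := ne_of_gt hτ.1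
          field_simp
  -- the truncation chain
  set trunc : ℕ → USp L N := fun m => WithLp.toLp 2 (fun j => if (j.1 : ℕ) < m then d (Sum.inr j) else 0) with htruncdef
  have htl : ∀ ℓ : Fin L, uLow d ℓ = trunc (ℓ : ℕ) := by
    intro ℓ
    ext j
    show (if j.1 < ℓ then d (Sum.inr j) else 0) = (if (j.1 : ℕ) < (ℓ : ℕ) then d (Sum.inr j) else 0)
    by_cases h : j.1 < ℓ
    · rw [if_pos h, if_pos (Fin.lt_iff_val_lt_val.mp h)]
    · rw [if_neg h, if_neg (fun hc => h (Fin.lt_iff_val_lt_val.mpr hc))]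
  have ht0 : trunc (lb : ℕ) = 0 := by
    ext j
    show (if (j.1 : ℕ) < (lb : ℕ) then d (Sum.inr j) else 0) = 0
    by_cases h : (j.1 : ℕ) < (lb : ℕ)
    · rw [if_pos h]
      exact hdlt j.1 (Fin.lt_iff_val_lt_val.mpr h) j.2
    · rw [if_neg h]
  have htsucc : ∀ m (hm : m < L), ‖trunc (m + 1)‖ ≤ ‖trunc m‖ + ‖uBlk d ⟨m, hm⟩‖ := by
    intro m hm
    set e : USp L N := WithLp.toLp 2 (fun j => if (j.1 : ℕ) = m then d (Sum.inr j) else 0) with hedef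
    have hsplit : trunc (m + 1) = trunc m + e := by
      ext j
      show (if (j.1 : ℕ) < m + 1 then d (Sum.inr j) else 0) = trunc m j + e j
      show _ = (if (j.1 : ℕ) < m then d (Sum.inr j) else 0) + (if (j.1 : ℕ) = m then d (Sum.inr j) else 0)
      rcases Nat.lt_trichotomy (j.1 : ℕ) m with h | h | h
      · rw [if_pos (by omega), if_pos h, if_neg (by omega)]; ring
      · rw [if_pos (by omega), if_neg (by omega), if_pos h]; ring
      · rw [if_neg (by omega), if_neg (by omega), if_neg (by omega)]; ring
    have he : ‖e‖ = ‖uBlk d ⟨m, hm⟩‖ := by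
      apply eucl_sigma_norm_blk e ⟨m, hm⟩ (uBlk d ⟨m, hm⟩)
      · intro k
        show (if ((⟨⟨m, hm⟩, k⟩ : Σ ℓ : Fin L, Fin (N ℓ)).1 : ℕ) = m then _ else 0) = _
        rw [if_pos rfl]
        rfl
      · intro j hj
        show (if (j.1 : ℕ) = m then d (Sum.inr j) else 0) = 0
        rw [if_neg (fun hc => hj (Fin.ext hc))]
    calc ‖trunc (m + 1)‖ = ‖trunc m + e‖ := by rw [hsplit]
    _ ≤ ‖trunc m‖ + ‖e‖ := norm_add_le _ _
    _ = ‖trunc m‖ + ‖uBlk d ⟨m, hm⟩‖ := by rw [he]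
  have hchain : ∀ m : ℕ, m ≤ L → (lb : ℕ) < m →
      ‖trunc m‖ ≤ (∏ p ∈ Finset.Ico ((lb : ℕ) + 1) m, (1 + K p)) * ‖r‖ := by
    intro m
    induction m with
    | zero => intro _ h; omega
    | succ m ih =>
      intro hmL hlbm
      have hmL' : m < L := by omega
      rcases Nat.lt_or_ge (lb : ℕ) m with hcase | hcase
      · -- inductive step
        have hstep := htsucc m hmL'
        have hblk := hyb ⟨m, hmL'⟩ (Fin.lt_iff_val_lt_val.mpr hcase)
        rw [htl ⟨m, hmL'⟩] at hblk
        have hKm : 0 < K m := hKpos m (by omega) hmL'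
        have hprod : ∏ p ∈ Finset.Ico ((lb : ℕ) + 1) (m + 1), (1 + K p)
            = (∏ p ∈ Finset.Ico ((lb : ℕ) + 1) m, (1 + K p)) * (1 + K m) :=
          Finset.prod_Ico_succ_top (by omega) _
        have hih := ih (by omega) hcase
        calc ‖trunc (m + 1)‖ ≤ ‖trunc m‖ + ‖uBlk d ⟨m, hmL'⟩‖ := hstep
        _ ≤ ‖trunc m‖ + K m * ‖trunc m‖ := by
            have : K ((⟨m, hmL'⟩ : Fin L) : ℕ) = K m := rfl
            linarith [hblk]
        _ = (1 + K m) * ‖trunc m‖ := by ring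
        _ ≤ (1 + K m) * ((∏ p ∈ Finset.Ico ((lb : ℕ) + 1) m, (1 + K p)) * ‖r‖) :=
            mul_le_mul_of_nonneg_left hih (by linarith)
        _ = (∏ p ∈ Finset.Ico ((lb : ℕ) + 1) (m + 1), (1 + K p)) * ‖r‖ := by
            rw [hprod]; ring
      · -- base case : m = lb
        have hmlb : m = (lb : ℕ) := by omega
        have h1 := htsucc m hmL'
        have heq : (⟨m, hmL'⟩ : Fin L) = lb := Fin.ext hmlb
        have hblk : ‖uBlk d ⟨m, hmL'⟩‖ = ‖r‖ := by
          rw [heq]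
          have huB : uBlk d lb = -r := by
            ext k
            show d (Sum.inr ⟨lb, k⟩) = (-r) k
            rw [hdlb k]
            simp [PiLp.neg_apply]
          rw [huB, norm_neg]
        have h2 : ‖trunc m‖ = 0 := by rw [hmlb, ht0, norm_zero]
        have h3 : Finset.Ico ((lb : ℕ) + 1) (m + 1) = ∅ := by rw [hmlb]; exact Finset.Ico_self _
        rw [h3, Finset.prod_empty, one_mul]
        calc ‖trunc (m + 1)‖ ≤ ‖trunc m‖ + ‖uBlk d ⟨m, hmL'⟩‖ := h1
        _ = ‖r‖ := by rw [h2, hblk, zero_add]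
  have hdu : ‖du‖ ≤ (∏ p ∈ Finset.Ico ((lb : ℕ) + 1) L, (1 + K p)) * ‖r‖ := by
    have hdut : du = trunc L := by
      ext j
      show d (Sum.inr j) = (if (j.1 : ℕ) < L then d (Sum.inr j) else 0)
      rw [if_pos j.1.2]
    rw [hdut]
    exact hchain L le_rfl lb.2
  -- the penalty-term limits
  have hpen : ∀ ℓ : Fin L, Tendsto (fun τ : ℝ =>
      τ⁻¹ * ((∑ i, |uBlk (z + τ • d) ℓ i - ψ ℓ (z + τ • d) i|)
        - ∑ i, |uBlk z ℓ i - ψ ℓ z i|)) (𝓝[>] 0) (𝓝 (if ℓ = lb then -R1 else 0)) := by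
    intro ℓ
    rcases lt_trichotomy ℓ lb with hc | hc | hc
    · -- below lb : constant
      rw [if_neg (ne_of_lt hc)]
      have hconst : ∀ τ : ℝ, (∑ i, |uBlk (z + τ • d) ℓ i - ψ ℓ (z + τ • d) i|)
          = ∑ i, |uBlk z ℓ i - ψ ℓ z i| := by
        intro τ
        rw [hublk_lt ℓ hc τ, hψconst ℓ (le_of_lt hc) τ]
      refine Tendsto.congr (fun τ => ?_) tendsto_const_nhds
      rw [hconst τ, sub_self, mul_zero]
    · -- at lb
      subst hc
      rw [if_pos rfl]
      have hval : ∀ τ : ℝ, (∑ i, |uBlk (z + τ • d) lb i - ψ lb (z + τ • d) i|)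
          = |1 - τ| * R1 := by
        intro τ
        rw [hR1def, Finset.mul_sum]
        apply Finset.sum_congr rfl
        intro i _
        have h1 : uBlk (z + τ • d) lb i = uBlk z lb i + τ * (-(r i)) := by
          show (z + τ • d) (Sum.inr ⟨lb, i⟩) = z (Sum.inr ⟨lb, i⟩) + τ * (-(r i))
          rw [zsp_apply_add_smul, hdlb i]
        have h2 : ψ lb (z + τ • d) i = ψ lb z i := by
          rw [hψconst lb le_rfl τ]
        rw [h1, h2]
        have h3 : uBlk z lb i + τ * (-(r i)) - ψ lb z i = (1 - τ) * r i := by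
          rw [hri i]
          ring
        rw [h3, abs_mul]
      have hval0 : (∑ i, |uBlk z lb i - ψ lb z i|) = R1 := by
        rw [hR1def]
        apply Finset.sum_congr rfl
        intro i _
        rw [hri i]
      refine Tendsto.congr' ?_ (tendsto_const_nhds (x := -R1) (f := 𝓝[>] (0:ℝ)))
      filter_upwards [hev] with τ hτ
      have hτ1 : τ < 1 := lt_of_lt_of_le hτ.2 (min_le_right _ _)
      have hτ0 : τ ≠ 0 := ne_of_gt hτ.1
      rw [hval τ, hval0, abs_of_nonneg (by linarith : (0:ℝ) ≤ 1 - τ)]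
      field_simp
      ring
    · -- above lb
      rw [if_neg (ne_of_gt hc)]
      have hz0' : ∀ i, uBlk z ℓ i = ψ ℓ z i := by
        intro i
        have := hmax ℓ hc
        exact congrArg (fun v => v i) this
      have hP0 : (∑ i, |uBlk z ℓ i - ψ ℓ z i|) = 0 := by
        apply Finset.sum_eq_zero
        intro i _
        rw [hz0' i, sub_self, abs_zero]
      have hdd := hyd ℓ hc
      have hΦ : Continuous (fun v : EuclideanSpace ℝ (Fin (N ℓ)) => ∑ i, |uBlk d ℓ i - v i|) := by
        apply continuous_finset_sum
        intro i _
        exact (continuous_const.sub ((continuous_apply i).comp (PiLp.continuous_ofLp 2 _))).abs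
      have hΦ0 : (∑ i, |uBlk d ℓ i - uBlk d ℓ i|) = 0 := by
        simp
      have hcomp : Tendsto (fun τ : ℝ => ∑ i, |uBlk d ℓ i - (τ⁻¹ • (ψ ℓ (z + τ • d) - ψ ℓ z)) i|)
          (𝓝[>] 0) (𝓝 0) := by
        have := (hΦ.tendsto (uBlk d ℓ)).comp hdd
        rw [hΦ0] at this
        exact this
      refine Tendsto.congr' ?_ hcomp
      filter_upwards [hev] with τ hτ
      rw [hP0, sub_zero, Finset.mul_sum]
      apply Finset.sum_congr rfl
      intro i _
      have h1 : uBlk (z + τ • d) ℓ i = uBlk z ℓ i + τ * uBlk d ℓ i := by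
        show (z + τ • d) (Sum.inr ⟨ℓ, i⟩) = z (Sum.inr ⟨ℓ, i⟩) + τ * d (Sum.inr ⟨ℓ, i⟩)
        rw [zsp_apply_add_smul]
      have h2 : (τ⁻¹ • (ψ ℓ (z + τ • d) - ψ ℓ z)) i = τ⁻¹ * (ψ ℓ (z + τ • d) i - ψ ℓ z i) := by
        simp [PiLp.smul_apply, PiLp.sub_apply]
      rw [h2, h1, hz0' i]
      have hτ0 : τ ≠ 0 := ne_of_gt hτ.1
      have key : uBlk d ℓ i - τ⁻¹ * (ψ ℓ (z + τ • d) i - ψ ℓ z i)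
          = τ⁻¹ * (ψ ℓ z i + τ * uBlk d ℓ i - ψ ℓ (z + τ • d) i) := by
        field_simp
        ring
      rw [key, abs_mul, abs_of_pos (inv_pos.mpr hτ.1)]
  -- assembling the limit
  set Y := yg - β lb * R1 with hYdef
  have hcsum : (∑ ℓ, β ℓ * (if ℓ = lb then -R1 else 0)) = -(β lb * R1) := by
    rw [Finset.sum_eq_single lb]
    · rw [if_pos rfl]; ring
    · intro b _ hb
      rw [if_neg hb, mul_zero]
    · intro h
      exact absurd (Finset.mem_univ lb) h
  have hsum : Tendsto (fun τ : ℝ => ∑ ℓ, β ℓ * (τ⁻¹ *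
      ((∑ i, |uBlk (z + τ • d) ℓ i - ψ ℓ (z + τ • d) i|)
        - ∑ i, |uBlk z ℓ i - ψ ℓ z i|))) (𝓝[>] 0) (𝓝 (-(β lb * R1))) := by
    rw [← hcsum]
    exact tendsto_finset_sum _ (fun ℓ _ => (hpen ℓ).const_mul (β ℓ))
  have htot : Tendsto (fun τ : ℝ => τ⁻¹ * (Th g lam ψ β (z + τ • d) - Th g lam ψ β z))
      (𝓝[>] 0) (𝓝 Y) := by
    have hYeq : Y = yg + -(β lb * R1) := by rw [hYdef]; ring
    rw [hYeq]
    have hadd := hgterm.add hsum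
    refine Tendsto.congr (fun τ => ?_) hadd
    rw [Th, Th, Fobj, Fobj, hth τ]
    rw [show (∑ ℓ, β ℓ * (τ⁻¹ * ((∑ i, |uBlk (z + τ • d) ℓ i - ψ ℓ (z + τ • d) i|)
        - ∑ i, |uBlk z ℓ i - ψ ℓ z i|)))
      = τ⁻¹ * ((∑ ℓ, β ℓ * ∑ i, |uBlk (z + τ • d) ℓ i - ψ ℓ (z + τ • d) i|)
        - ∑ ℓ, β ℓ * ∑ i, |uBlk z ℓ i - ψ ℓ z i|) from by
        rw [← Finset.sum_sub_distrib, Finset.mul_sum]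
        apply Finset.sum_congr rfl
        intro ℓ _
        ring]
    ring
  -- d-stationarity gives the contradiction
  have hdd2 : HasDirDeriv (Th g lam ψ β) z d Y := by
    refine htot.congr fun τ => ?_
    rw [smul_eq_mul]
  have hY0 : 0 ≤ Y := by
    have := hstat d
    rw [dirD_eq hdd2] at this
    exact this
  have hrR1 : ‖r‖ ≤ R1 := by
    rw [hR1def]
    exact eucl_norm_le_sum r
  have hprodpos : 0 < ∏ p ∈ Finset.Ico ((lb : ℕ) + 1) L, (1 + K p) := by
    apply Finset.prod_pos
    intro p hp
    have hp' := Finset.mem_Ico.mp hp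
    have := hKpos p (by omega) hp'.2
    linarith
  have hfin : Y < 0 := by
    have h1 : yg ≤ Kg * ((∏ p ∈ Finset.Ico ((lb : ℕ) + 1) L, (1 + K p)) * ‖r‖) :=
      le_trans hyg (mul_le_mul_of_nonneg_left hdu hKg.le)
    have h2 : Kg * ((∏ p ∈ Finset.Ico ((lb : ℕ) + 1) L, (1 + K p)) * ‖r‖)
        ≤ Kg * (∏ p ∈ Finset.Ico ((lb : ℕ) + 1) L, (1 + K p)) * R1 := by
      rw [← mul_assoc]
      exact mul_le_mul_of_nonneg_left hrR1 (by positivity)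
    have h3 := hT lb
    rw [hYdef]
    nlinarith [hR1pos]
  linarith
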